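/- If a lattice L satisfies the identities (L2), (U), and (B), then there exist a tree-like poset Γ of length at most 2 and a lattice embedding φ : L → Co(Γ) that preserves the least and greatest elements of L whenever they exist; moreover, if L is finite then Γ can be taken finite. -/

import Mathlib

/-! Common definitions: lattices of order-convex subsets of a poset,
length of a poset, the identities (S), (U), (B), (L2), (H_n), (H_{m,n}),
join-irreducibility, the join-dependency relation, join-seeds,
the posets P_{I,J}, tree-like posets, D-closed sets,
and complete lattice congruences. -/

open Set

/-- The lattice `Co P` of all order-convex subsets of a poset `P`. -/
def Co (P : Type*) [PartialOrder P] : Type _ := {s : Set P // s.OrdConnected}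

namespace Co

variable {P : Type*} [PartialOrder P]

instance : PartialOrder (Co P) := Subtype.partialOrder _

instance : InfSet (Co P) :=
  ⟨fun S => ⟨⋂ s ∈ S, s.1, Set.ordConnected_biInter fun s _ => s.2⟩⟩

noncomputable instance : CompleteLattice (Co P) :=
  completeLatticeOfInf (Co P) (by
    intro S
    constructor
    · intro t ht
      exact Set.biInter_subset_of_mem (t := fun s => s.1) ht
    · intro b hb
      exact Set.subset_iInter₂ fun t ht => hb ht)

/-- The order-convex subset of `P` with underlying set `X`. -/
def mk' (X : Set P) (hX : X.OrdConnected) : Co P := ⟨X, hX⟩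

/-- The singleton `{p}`, as an order-convex set. -/
def sngl (p : P) : Co P := ⟨{p}, Set.ordConnected_singleton⟩

/-- The empty order-convex set. -/
def emp : Co P := ⟨∅, Set.ordConnected_empty⟩

end Co

/-- `lengthLE P n` states that the poset `P` has length at most `n`, that is,
every finite chain of `P` has at most `n + 1` elements. -/
def lengthLE (P : Type*) [PartialOrder P] (n : ℕ) : Prop :=
  ∀ C : Finset P, IsChain (· ≤ ·) (C : Set P) → C.card ≤ n + 1

section Identities

/-- The Stirlitz identity (S). -/
def IdS (L : Type*) [Lattice L] : Prop :=
  ∀ a b b₀ b₁ c : L,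
    a ⊓ ((b ⊓ (b₀ ⊔ b₁)) ⊔ c) =
      (a ⊓ (b ⊓ (b₀ ⊔ b₁)))
      ⊔ (a ⊓ (b₀ ⊔ c) ⊓ ((b ⊓ (b₀ ⊔ b₁) ⊓ (a ⊔ b₀)) ⊔ c))
      ⊔ (a ⊓ (b₁ ⊔ c) ⊓ ((b ⊓ (b₀ ⊔ b₁) ⊓ (a ⊔ b₁)) ⊔ c))

/-- The Udav identity (U). -/
def IdU (L : Type*) [Lattice L] : Prop :=
  ∀ x x₀ x₁ x₂ : L,
    x ⊓ (x₀ ⊔ x₁) ⊓ (x₁ ⊔ x₂) ⊓ (x₀ ⊔ x₂) =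
      (x ⊓ x₀ ⊓ (x₁ ⊔ x₂)) ⊔ (x ⊓ x₁ ⊓ (x₀ ⊔ x₂)) ⊔ (x ⊓ x₂ ⊓ (x₀ ⊔ x₁))

/-- The Bond identity (B). -/
def IdB (L : Type*) [Lattice L] : Prop :=
  ∀ x a₀ a₁ b₀ b₁ : L,
    x ⊓ (a₀ ⊔ a₁) ⊓ (b₀ ⊔ b₁) =
      (x ⊓ a₀ ⊓ (b₀ ⊔ b₁)) ⊔ (x ⊓ a₁ ⊓ (b₀ ⊔ b₁))
      ⊔ (x ⊓ b₀ ⊓ (a₀ ⊔ a₁)) ⊔ (x ⊓ b₁ ⊓ (a₀ ⊔ a₁))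
      ⊔ (x ⊓ (a₀ ⊔ a₁) ⊓ (b₀ ⊔ b₁) ⊓ (a₀ ⊔ b₀) ⊓ (a₁ ⊔ b₁))
      ⊔ (x ⊓ (a₀ ⊔ a₁) ⊓ (b₀ ⊔ b₁) ⊓ (a₀ ⊔ b₁) ⊓ (a₁ ⊔ b₀))

/-- The identity (L₂). -/
def IdL2 (L : Type*) [Lattice L] : Prop :=
  ∀ a b b' c c' : L,
    a ⊓ ((b ⊓ (c ⊔ c')) ⊔ b') =
      (a ⊓ b ⊓ (c ⊔ c')) ⊔ (a ⊓ ((b ⊓ c) ⊔ b')) ⊔ (a ⊓ ((b ⊓ c') ⊔ b'))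

variable {L : Type*} [Lattice L]

/-- The lattice polynomial `U_{i,n}` (in the variables `x₀, …, xₙ, x'₁, …, x'ₙ`). -/
def Upoly (x x' : ℕ → L) (n : ℕ) (i : ℕ) : L :=
  if h : n ≤ i then x n
  else x i ⊓ (Upoly x x' n (i + 1) ⊔ x' (i + 1))
  termination_by n - i
  decreasing_by omega

/-- The lattice polynomial `V_{i,j,n}`. -/
def Vpoly (x x' : ℕ → L) (n i : ℕ) (j : ℕ) : L :=
  if h : i ≤ j then (x i ⊓ Upoly x x' n (i + 1)) ⊔ (x i ⊓ x' (i + 1))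
  else x j ⊓ (Vpoly x x' n i (j + 1) ⊔ x' (j + 1))
  termination_by i - j
  decreasing_by omega

/-- The lattice polynomial `W_{i,j,n}`. -/
def Wpoly (x x' : ℕ → L) (n i : ℕ) (j : ℕ) : L :=
  if h : i ≤ j then
    x i ⊓ (x' (i + 1) ⊔ x' (i + 2)) ⊓ ((Upoly x x' n (i + 1) ⊓ (x i ⊔ x' (i + 2))) ⊔ x' (i + 1))
  else x j ⊓ (Wpoly x x' n i (j + 1) ⊔ x' (j + 1))
  termination_by i - j
  decreasing_by omega

/-- `bigJoin f k = f 0 ⊔ f 1 ⊔ ⋯ ⊔ f k`. -/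
def bigJoin (f : ℕ → L) : ℕ → L
  | 0 => f 0
  | k + 1 => bigJoin f k ⊔ f (k + 1)

end Identities

/-- The identity (Hₙ) : `Uₙ = ⋁_{0 ≤ i ≤ n-1} V_{i,n} ∨ ⋁_{0 ≤ i ≤ n-2} W_{i,n}`
(intended for `n ≥ 1`). -/
def IdH (n : ℕ) (L : Type*) [Lattice L] : Prop :=
  ∀ x x' : ℕ → L,
    Upoly x x' n 0 =
      bigJoin (fun i =>
        if i + 2 ≤ n then Vpoly x x' n i 0 ⊔ Wpoly x x' n i 0 else Vpoly x x' n i 0) (n - 1)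

/-- The identity (H_{m,n}) (intended for `m, n ≥ 1`); the common base point is
`x 0 = y 0 = t`. -/
def IdHmn (m n : ℕ) (L : Type*) [Lattice L] : Prop :=
  ∀ x x' y y' : ℕ → L, x 0 = y 0 →
    Upoly x x' m 0 ⊓ Upoly y y' n 0 =
      bigJoin (fun i =>
          if i + 2 ≤ m then
            (Vpoly x x' m i 0 ⊓ Upoly y y' n 0) ⊔ (Wpoly x x' m i 0 ⊓ Upoly y y' n 0)
          else Vpoly x x' m i 0 ⊓ Upoly y y' n 0) (m - 1)
      ⊔ bigJoin (fun j =>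
          if j + 2 ≤ n then
            (Upoly x x' m 0 ⊓ Vpoly y y' n j 0) ⊔ (Upoly x x' m 0 ⊓ Wpoly y y' n j 0)
          else Upoly x x' m 0 ⊓ Vpoly y y' n j 0) (n - 1)
      ⊔ (Upoly x x' m 0 ⊓ Upoly y y' n 0 ⊓ (x 1 ⊔ y' 1) ⊓ (x' 1 ⊔ y 1))

/-- `p` is join-irreducible: `p = x ⊔ y` implies `p = x` or `p = y`. -/
def JIrr {L : Type*} [Lattice L] (p : L) : Prop :=
  ∀ x y : L, p = x ⊔ y → p = x ∨ p = y

/-- The join-dependency relation `p D q`. -/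
def DRel {L : Type*} [Lattice L] (p q : L) : Prop :=
  p ≠ q ∧ ∃ x : L, p ≤ q ⊔ x ∧ ∀ y < q, ¬ p ≤ y ⊔ x

/-- A subset `S` of a lattice `L` is a join-seed. -/
def JoinSeed (L : Type*) [Lattice L] (S : Set L) : Prop :=
  (∀ p ∈ S, JIrr p) ∧
  (∀ a : L, ∃ T ⊆ S, IsLUB T a) ∧
  (∀ p ∈ S, ∀ a b : L, p ≤ a ⊔ b → ¬ p ≤ a → ¬ p ≤ b →
    ∃ x ∈ S, ∃ y ∈ S, x ≤ a ∧ y ≤ b ∧ p ≤ x ⊔ y ∧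
      (∀ x' < x, ¬ p ≤ x' ⊔ y) ∧ (∀ y' < y, ¬ p ≤ x ⊔ y'))

/-- The poset `P_{I,J} = I ∪ {p} ∪ J`, where every element of `I` is below `p`,
`p` is below every element of `J`, every element of `I` is below every element
of `J`, and there are no other strict comparabilities. -/
def PIJ (I J : Type*) : Type _ := I ⊕ (Unit ⊕ J)

namespace PIJ

variable {I J : Type*}

/-- The rank (height) of an element of `P_{I,J}`. -/
def rank (a : PIJ I J) : ℕ :=
  Sum.elim (fun _ => 0) (Sum.elim (fun _ => 1) fun _ => 2) a

instance : PartialOrder (PIJ I J) where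
  le a b := a = b ∨ rank a < rank b
  le_refl a := Or.inl rfl
  le_trans a b c hab hbc := by
    rcases hab with rfl | h
    · exact hbc
    · rcases hbc with rfl | h'
      · exact Or.inr h
      · exact Or.inr (h.trans h')
  le_antisymm a b hab hba := by
    rcases hab with rfl | h
    · rfl
    · rcases hba with rfl | h'
      · rfl
      · omega

end PIJ

/-- A poset is tree-like if it has no infinite bounded chain and between any two
points there is at most one repetition-free finite path with respect to the
covering relation. -/
def TreeLike (P : Type*) [PartialOrder P] : Prop :=
  (∀ C : Set P, IsChain (· ≤ ·) C → BddAbove C → BddBelow C → C.Finite) ∧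
  (∀ a b : P, ∀ l₁ l₂ : List P,
    l₁.Nodup → l₁.head? = some a → l₁.getLast? = some b →
      l₁.Chain' (fun u v => u ⋖ v ∨ v ⋖ u) →
    l₂.Nodup → l₂.head? = some a → l₂.getLast? = some b →
      l₂.Chain' (fun u v => u ⋖ v ∨ v ⋖ u) →
    l₁ = l₂)

/-- A subset `U` of a poset `P` is `D`-closed. -/
def DClosed {P : Type*} [PartialOrder P] (U : Set P) : Prop :=
  ∀ x p y : P, x < p → p < y → (x ∈ U ∨ y ∈ U) → p ∈ U

/-- A complete congruence of a complete lattice. -/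
structure IsCompleteCongr {L : Type*} [CompleteLattice L] (θ : L → L → Prop) : Prop where
  refl : ∀ x, θ x x
  symm : ∀ {x y}, θ x y → θ y x
  trans : ∀ {x y z}, θ x y → θ y z → θ x z
  sup : ∀ {a b c d}, θ a b → θ c d → θ (a ⊔ c) (b ⊔ d)
  inf : ∀ {a b c d}, θ a b → θ c d → θ (a ⊓ c) (b ⊓ d)
  cSup : ∀ (x : L) (Y : Set L), Y.Nonempty → (∀ y ∈ Y, θ x y) → θ x (sSup Y)
  cInf : ∀ (x : L) (Y : Set L), Y.Nonempty → (∀ y ∈ Y, θ x y) → θ x (sInf Y)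

/-- The map `h_U : Co(P) → Co(P ∖ U)`, `X ↦ X ∖ U`. -/
def coRestrict {P : Type*} [PartialOrder P] (U : Set P) (X : Co P) :
    Co {p : P // p ∉ U} :=
  ⟨Subtype.val ⁻¹' X.1, by
    constructor
    rintro a ha b hb z hz
    exact X.2.out ha hb ⟨hz.1, hz.2⟩⟩

/-- The lattice `D(P)` of all `D`-closed subsets of a poset `P`. -/
def DSub (P : Type*) [PartialOrder P] : Type _ := {U : Set P // DClosed U}

namespace DSub

variable {P : Type*} [PartialOrder P]

instance : PartialOrder (DSub P) := Subtype.partialOrder _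

instance : InfSet (DSub P) :=
  ⟨fun S => ⟨⋂ U ∈ S, U.1, by
    intro x p y h1 h2 h3
    simp only [Set.mem_iInter] at h3 ⊢
    intro U hU
    exact U.2 x p y h1 h2 (h3.imp (fun h => h U hU) fun h => h U hU)⟩⟩

noncomputable instance : CompleteLattice (DSub P) :=
  completeLatticeOfInf (DSub P) (by
    intro S
    constructor
    · intro t ht
      exact Set.biInter_subset_of_mem (t := fun U => U.1) ht
    · intro b hb
      exact Set.subset_iInter₂ fun t ht => hb ht)

end DSub

/-!
The poset `Γ = SepPoset L` is a disjoint union of posets `P_{I,J}`, one for each `Separator`: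
its middle point carries a proper filter `F` of `L`, the points of `I` and `J` carry prime
filters `A`, `B` with `A ∩ B ⊆ F`, and whenever `x ⊔ y ∈ F` with `x, y ∉ F`, some filter of `I`
and some filter of `J` meet `{x, y}`. Sending `a` to the set of points whose filter contains `a`
is then a lattice homomorphism into `Co Γ`; components of length two with a single middle point
make `Γ` tree-like.

For injectivity, given `a ≰ b`, take `F` maximal among the filters containing `a` and avoiding
`b`. In the graph on `L ∖ F` joining `x` and `y` when `x ⊔ y ∈ F`, identity (U) rules out
triangles and by identity (B) each end of an edge is adjacent to an end of any other edge, so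
the vertices that are not isolated form a complete bipartite graph. Identity (L2) shows that a
filter maximal inside the set of elements joined into `F` with every vertex of one side is
prime; these prime filters make up `I` and `J`.
-/

section Filters

variable {L : Type*} [Lattice L]

structure IsProperFilter (F : Set L) : Prop where
  isUpperSet : IsUpperSet F
  infClosed : InfClosed F
  nonempty : F.Nonempty
  ne_univ : F ≠ univ

structure IsPrimeFilter (F : Set L) : Prop extends IsProperFilter F where
  mem_or_mem : ∀ ⦃x y : L⦄, x ⊔ y ∈ F → x ∈ F ∨ y ∈ F

theorem IsProperFilter.notMem_of_isBot {F : Set L} (hF : IsProperFilter F) {z : L}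
    (hz : IsBot z) : z ∉ F :=
  fun h => hF.ne_univ (eq_univ_of_forall fun x => hF.isUpperSet (hz x) h)

theorem IsProperFilter.mem_of_isTop {F : Set L} (hF : IsProperFilter F) {t : L}
    (ht : IsTop t) : t ∈ F :=
  let ⟨x, hx⟩ := hF.nonempty
  hF.isUpperSet (ht x) hx

theorem exists_maximal_filter_subset {T : Set L} (hT : IsUpperSet T) {c : L} (hc : c ∈ T) :
    ∃ P ⊆ T, IsUpperSet P ∧ InfClosed P ∧ c ∈ P ∧ ∀ z ∉ P, ∃ q ∈ P, q ⊓ z ∉ T := by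
  obtain ⟨P, -, hmax⟩ := zorn_subset_nonempty
    {P : Set L | P ⊆ T ∧ IsUpperSet P ∧ InfClosed P ∧ c ∈ P}
    (fun C hC hchain ⟨P₀, hP₀⟩ => by
      refine ⟨⋃₀ C, ⟨sUnion_subset fun P hP => (hC hP).1,
        isUpperSet_sUnion fun P hP => (hC hP).2.1, ?_, ⟨P₀, hP₀, (hC hP₀).2.2.2⟩⟩,
        fun _ => subset_sUnion_of_mem⟩
      rintro x ⟨P, hP, hxP⟩ y ⟨Q, hQ, hyQ⟩
      rcases hchain.total hP hQ with hPQ | hQP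
      · exact ⟨Q, hQ, (hC hQ).2.2.1 (hPQ hxP) hyQ⟩
      · exact ⟨P, hP, (hC hP).2.2.1 hxP (hQP hyQ)⟩)
    (Ici c) ⟨fun y hy => hT hy hc, isUpperSet_Ici c, fun x hx y hy => le_inf hx hy, le_rfl⟩
  obtain ⟨hPT, hPup, hPinf, hcP⟩ := hmax.prop
  refine ⟨P, hPT, hPup, hPinf, hcP, fun z hz => ?_⟩
  by_contra! hzT
  -- the filter generated by `P ∪ {z}` still lies in `T`, so by maximality it is `P`
  have hgen : {y | ∃ q ∈ P, q ⊓ z ≤ y} ⊆ P := by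
    refine hmax.2 ⟨?_, ?_, ?_, c, hcP, inf_le_left⟩ fun y hy => ⟨y, hy, inf_le_left⟩
    · rintro y ⟨q, hq, hqy⟩
      exact hT hqy (hzT q hq)
    · rintro y y' hyy' ⟨q, hq, hqy⟩
      exact ⟨q, hq, hqy.trans hyy'⟩
    · rintro y ⟨q, hq, hqy⟩ y' ⟨q', hq', hqy'⟩
      exact ⟨q ⊓ q', hPinf hq hq', le_inf ((inf_le_inf_right z inf_le_left).trans hqy)
        ((inf_le_inf_right z inf_le_right).trans hqy')⟩
  exact hz (hgen ⟨c, hcP, inf_le_right⟩)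

structure IsMaxFilterAvoiding (F : Set L) (b : L) : Prop where
  isUpperSet : IsUpperSet F
  infClosed : InfClosed F
  nonempty : F.Nonempty
  notMem : b ∉ F
  exists_inf_le : ∀ x ∉ F, ∃ f ∈ F, f ⊓ x ≤ b

theorem exists_isMaxFilterAvoiding {a b : L} (hab : ¬ a ≤ b) :
    ∃ F, IsMaxFilterAvoiding F b ∧ a ∈ F := by
  obtain ⟨F, hFb, hup, hinf, haF, hmax⟩ :=
    exists_maximal_filter_subset (isLowerSet_Iic b).compl (c := a) hab
  exact ⟨F, ⟨hup, hinf, ⟨a, haF⟩, fun h => hFb h le_rfl, by simpa using hmax⟩, haF⟩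

namespace IsMaxFilterAvoiding

variable {F : Set L} {b : L}

theorem isProperFilter (hF : IsMaxFilterAvoiding F b) : IsProperFilter F :=
  ⟨hF.isUpperSet, hF.infClosed, hF.nonempty, fun h => hF.notMem (h ▸ mem_univ b)⟩

theorem not_le (hF : IsMaxFilterAvoiding F b) {y : L} (hy : y ∈ F) : ¬ y ≤ b :=
  fun h => hF.notMem (hF.isUpperSet h hy)

theorem exists_forall_inf_le (hF : IsMaxFilterAvoiding F b) (s : List L)
    (hs : ∀ x ∈ s, x ∉ F) : ∃ f ∈ F, ∀ x ∈ s, f ⊓ x ≤ b := by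
  induction s with
  | nil =>
    obtain ⟨f, hf⟩ := hF.nonempty
    exact ⟨f, hf, by simp⟩
  | cons x s ih =>
    obtain ⟨f, hf, hfs⟩ := ih fun y hy => hs y (List.mem_cons_of_mem x hy)
    obtain ⟨g, hg, hgx⟩ := hF.exists_inf_le x (hs x List.mem_cons_self)
    refine ⟨f ⊓ g, hF.infClosed hf hg, List.forall_mem_cons.2
      ⟨(inf_le_inf_right x inf_le_right).trans hgx, fun y hy => ?_⟩⟩
    exact (inf_le_inf_right y inf_le_left).trans (hfs y hy)

variable {x y z w : L}

theorem sup_notMem_of_idU (hF : IsMaxFilterAvoiding F b) (hU : IdU L) (hx : x ∉ F) (hy : y ∉ F)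
    (hz : z ∉ F) (hxy : x ⊔ y ∈ F) (hyz : y ⊔ z ∈ F) : x ⊔ z ∉ F := by
  intro hxz
  obtain ⟨f, hf, hfb⟩ := hF.exists_forall_inf_le [x, y, z] (by simp [*])
  apply hF.not_le (hF.infClosed (hF.infClosed (hF.infClosed hf hxy) hyz) hxz)
  rw [hU]
  refine sup_le (sup_le ?_ ?_) ?_ <;> exact inf_le_left.trans (hfb _ (by simp))

theorem sup_mem_or_sup_mem_of_idB (hF : IsMaxFilterAvoiding F b) (hB : IdB L) {a₀ a₁ b₀ b₁ : L}
    (ha₀ : a₀ ∉ F) (ha₁ : a₁ ∉ F) (hb₀ : b₀ ∉ F) (hb₁ : b₁ ∉ F) (ha : a₀ ⊔ a₁ ∈ F)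
    (hb : b₀ ⊔ b₁ ∈ F) : a₀ ⊔ b₀ ∈ F ∨ a₀ ⊔ b₁ ∈ F := by
  by_contra! h
  obtain ⟨f, hf, hfb⟩ :=
    hF.exists_forall_inf_le [a₀, a₁, b₀, b₁, a₀ ⊔ b₀, a₀ ⊔ b₁] (by simp [*])
  apply hF.not_le (hF.infClosed (hF.infClosed hf ha) hb)
  rw [hB]
  have hle : ∀ {s u t v : L}, f ⊓ s ⊓ u ⊓ t ⊓ v ≤ f ⊓ t :=
    le_inf (inf_le_left.trans (inf_le_left.trans (inf_le_left.trans inf_le_left)))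
      (inf_le_left.trans inf_le_right)
  refine sup_le (sup_le (sup_le (sup_le (sup_le ?_ ?_) ?_) ?_) ?_) ?_
  · exact inf_le_left.trans (hfb a₀ (by simp))
  · exact inf_le_left.trans (hfb a₁ (by simp))
  · exact inf_le_left.trans (hfb b₀ (by simp))
  · exact inf_le_left.trans (hfb b₁ (by simp))
  · exact hle.trans (hfb (a₀ ⊔ b₀) (by simp))
  · exact hle.trans (hfb (a₀ ⊔ b₁) (by simp))

theorem sup_mem_of_path (hF : IsMaxFilterAvoiding F b) (hU : IdU L) (hB : IdB L) (hx : x ∉ F)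
    (hy : y ∉ F) (hz : z ∉ F) (hw : w ∉ F) (hxy : x ⊔ y ∈ F) (hyz : y ⊔ z ∈ F)
    (hzw : z ⊔ w ∈ F) : x ⊔ w ∈ F :=
  (hF.sup_mem_or_sup_mem_of_idB hB hx hy hw hz hxy (sup_comm z w ▸ hzw)).resolve_right
    (hF.sup_notMem_of_idU hU hx hy hz hxy hyz)

theorem sup_mem_cases (hF : IsMaxFilterAvoiding F b) (hU : IdU L) (hB : IdB L) {a₀ a₁ : L}
    (ha₀ : a₀ ∉ F) (ha₁ : a₁ ∉ F) (ha : a₀ ⊔ a₁ ∈ F) (hx : x ∉ F) (hy : y ∉ F)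
    (hxy : x ⊔ y ∈ F) : (x ⊔ a₀ ∈ F ∧ y ⊔ a₁ ∈ F) ∨ (x ⊔ a₁ ∈ F ∧ y ⊔ a₀ ∈ F) := by
  have hx' := hF.sup_mem_or_sup_mem_of_idB hB hx hy ha₀ ha₁ hxy ha
  have hy' := hF.sup_mem_or_sup_mem_of_idB hB hy hx ha₀ ha₁ (sup_comm x y ▸ hxy) ha
  have hnot : ∀ {a : L}, a ∉ F → ¬ (x ⊔ a ∈ F ∧ y ⊔ a ∈ F) := fun ha ⟨hxa, hya⟩ =>
    hF.sup_notMem_of_idU hU hx ha hy hxa (sup_comm y _ ▸ hya) hxy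
  have := @hnot _ ha₀
  have := @hnot _ ha₁
  tauto

theorem exists_sup_notMem_and_sup_notMem (hF : IsMaxFilterAvoiding F b) (hU : IdU L)
    (hB : IdB L) {W : Set L} {e : L} (he : e ∉ F) (hW : ∀ w ∈ W, w ∉ F → w ⊔ e ∈ F)
    (hx : ∃ w ∈ W, x ⊔ w ∉ F) (hy : ∃ w ∈ W, y ⊔ w ∉ F) :
    ∃ w ∈ W, x ⊔ w ∉ F ∧ y ⊔ w ∉ F := by
  obtain ⟨u, hu, hxu⟩ := hx
  obtain ⟨v, hv, hyv⟩ := hy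
  have notMem_left {s t : L} (h : s ⊔ t ∉ F) : s ∉ F := fun hs => h (hF.isUpperSet le_sup_left hs)
  have notMem_right {s t : L} (h : s ⊔ t ∉ F) : t ∉ F :=
    fun ht => h (hF.isUpperSet le_sup_right ht)
  by_contra! h
  have hyu : y ⊔ u ∈ F := h u hu hxu
  have hxv : x ⊔ v ∈ F := not_imp_comm.1 (h v hv) hyv
  have huv : u ⊔ v ∈ F :=
    (hF.sup_mem_or_sup_mem_of_idB hB (notMem_right hxu) (notMem_left hyv) (notMem_left hxu)
      (notMem_right hyv) (sup_comm y u ▸ hyu) hxv).resolve_left (sup_comm x u ▸ hxu)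
  exact hF.sup_notMem_of_idU hU (notMem_right hxu) he (notMem_right hyv)
    (hW u hu (notMem_right hxu)) (sup_comm v e ▸ hW v hv (notMem_right hyv)) huv

theorem inf_sup_notMem_of_idL2 (hF : IsMaxFilterAvoiding F b) (hL2 : IdL2 L) {p u v w : L}
    (hp : p ∉ F) (hu : p ⊓ u ⊔ w ∉ F) (hv : p ⊓ v ⊔ w ∉ F) : p ⊓ (u ⊔ v) ⊔ w ∉ F := by
  intro h
  obtain ⟨f, hf, hfb⟩ := hF.exists_forall_inf_le [p, p ⊓ u ⊔ w, p ⊓ v ⊔ w] (by simp [*])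
  apply hF.not_le (hF.infClosed hf h)
  rw [hL2]
  refine sup_le (sup_le ?_ ?_) ?_
  · exact inf_le_left.trans (hfb p (by simp))
  · exact hfb _ (by simp)
  · exact hfb _ (by simp)

theorem exists_isPrimeFilter (hF : IsMaxFilterAvoiding F b) (hL2 : IdL2 L) (hU : IdU L)
    (hB : IdB L) {W : Set L} {e : L} (he : e ∉ F) (hW : ∀ w ∈ W, w ∉ F → w ⊔ e ∈ F)
    (hWF : ∃ w ∈ W, w ∉ F) {c : L} (hc : c ∉ F) (hcW : ∀ w ∈ W, c ⊔ w ∈ F) :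
    ∃ P, IsPrimeFilter P ∧ c ∈ P ∧ ∀ y ∈ P, ∀ w ∈ W, y ⊔ w ∈ F := by
  set T := {y | ∀ w ∈ W, y ⊔ w ∈ F}
  have hT : IsUpperSet T := fun y z hyz hy w hw => hF.isUpperSet (sup_le_sup_right hyz w) (hy w hw)
  obtain ⟨P, hPT, hPup, hPinf, hcP, hmax⟩ := exists_maximal_filter_subset hT hcW
  obtain ⟨w₀, hw₀, hw₀F⟩ := hWF
  refine ⟨P, ⟨⟨hPup, hPinf, ⟨c, hcP⟩, fun h => ?_⟩, fun u v huv => ?_⟩, hcP, hPT⟩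
  · exact hw₀F (sup_idem w₀ ▸ hPT (h ▸ mem_univ w₀) w₀ hw₀)
  by_contra! ⟨hu, hv⟩
  obtain ⟨q₁, hq₁, hq₁u⟩ := hmax u hu
  obtain ⟨q₂, hq₂, hq₂v⟩ := hmax v hv
  set p := q₁ ⊓ q₂ ⊓ c
  have hpu : ∃ w ∈ W, p ⊓ u ⊔ w ∉ F := by
    by_contra! h
    exact hq₁u (hT (inf_le_inf_right u (inf_le_left.trans inf_le_left)) h)
  have hpv : ∃ w ∈ W, p ⊓ v ⊔ w ∉ F := by
    by_contra! h
    exact hq₂v (hT (inf_le_inf_right v (inf_le_left.trans inf_le_right)) h)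
  obtain ⟨w, hw, hwu, hwv⟩ := hF.exists_sup_notMem_and_sup_notMem hU hB he hW hpu hpv
  exact hF.inf_sup_notMem_of_idL2 hL2 (fun hp => hc (hF.isUpperSet inf_le_right hp)) hwu hwv
    (hPT (hPinf (hPinf (hPinf hq₁ hq₂) hcP) huv) w hw)

end IsMaxFilterAvoiding

end Filters

structure Separator (L : Type*) [Lattice L] where
  mid : Set L
  lower : Set (Set L)
  upper : Set (Set L)
  isProperFilter_mid : IsProperFilter mid
  isPrimeFilter_of_mem_lower : ∀ A ∈ lower, IsPrimeFilter A
  isPrimeFilter_of_mem_upper : ∀ B ∈ upper, IsPrimeFilter B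
  inter_subset_mid : ∀ A ∈ lower, ∀ B ∈ upper, A ∩ B ⊆ mid
  sup_mem_mid : ∀ x y, x ⊔ y ∈ mid → x ∈ mid ∨ y ∈ mid ∨
    ((∃ A ∈ lower, x ∈ A ∨ y ∈ A) ∧ (∃ B ∈ upper, x ∈ B ∨ y ∈ B))

instance {L : Type*} [Lattice L] [Finite L] : Finite (Separator L) :=
  Finite.of_injective (fun σ : Separator L => (σ.mid, σ.lower, σ.upper)) fun σ τ h => by
    cases σ; cases τ
    simp only [Prod.mk.injEq] at h
    obtain ⟨rfl, rfl, rfl⟩ := h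
    rfl

namespace IsMaxFilterAvoiding

variable {L : Type*} [Lattice L] {F : Set L} {b : L}

theorem exists_separator_of_sup_mem (hF : IsMaxFilterAvoiding F b) (hL2 : IdL2 L) (hU : IdU L)
    (hB : IdB L) {a₀ a₁ : L} (ha₀ : a₀ ∉ F) (ha₁ : a₁ ∉ F) (ha : a₀ ⊔ a₁ ∈ F) :
    ∃ σ : Separator L, σ.mid = F := by
  set N := {w | w ∉ F ∧ w ⊔ a₀ ∈ F}
  -- outside `F`, `side₀` and `side₁` are the two sides of the bipartite graph, `a₀ ∈ side₀`
  -- and `a₁ ∈ N ⊆ side₁`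
  set side₀ := {y | ∀ w ∈ N, y ⊔ w ∈ F}
  set side₁ := {y | ∀ v ∈ side₀, y ⊔ v ∈ F}
  have ha₁N : a₁ ∈ N := ⟨ha₁, sup_comm a₀ a₁ ▸ ha⟩
  have ha₀side₀ : a₀ ∈ side₀ := fun w hw => sup_comm w a₀ ▸ hw.2
  have hlower : ∀ x ∉ F, x ⊔ a₁ ∈ F → ∃ A ∈ {A | IsPrimeFilter A ∧ A ⊆ side₀}, x ∈ A := by
    intro x hx hxa
    have hxside₀ : x ∈ side₀ := fun w ⟨hw, hwa⟩ => hF.sup_mem_of_path hU hB hx ha₁ ha₀ hw hxa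
      (sup_comm a₀ a₁ ▸ ha) (sup_comm w a₀ ▸ hwa)
    obtain ⟨A, hA, hxA, hAS⟩ := hF.exists_isPrimeFilter hL2 hU hB ha₀ (fun w hw _ => hw.2)
      ⟨a₁, ha₁N, ha₁⟩ hx hxside₀
    exact ⟨A, ⟨hA, hAS⟩, hxA⟩
  have hupper : ∀ x ∉ F, x ⊔ a₀ ∈ F → ∃ B ∈ {B | IsPrimeFilter B ∧ B ⊆ side₁}, x ∈ B := by
    intro x hx hxa
    obtain ⟨B, hB', hxB, hBS⟩ := hF.exists_isPrimeFilter hL2 hU hB (W := side₀) ha₁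
      (fun w hw _ => hw a₁ ha₁N) ⟨a₀, ha₀side₀, ha₀⟩ hx (fun v hv => sup_comm v x ▸ hv x ⟨hx, hxa⟩)
    exact ⟨B, ⟨hB', hBS⟩, hxB⟩
  refine ⟨⟨F, {A | IsPrimeFilter A ∧ A ⊆ side₀}, {B | IsPrimeFilter B ∧ B ⊆ side₁},
    hF.isProperFilter, fun A hA => hA.1, fun B hB => hB.1,
    fun A hA B hB x hx => sup_idem x ▸ hB.2 hx.2 x (hA.2 hx.1), fun x y hxy => ?_⟩, rfl⟩
  by_cases hx : x ∈ F
  · exact Or.inl hx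
  by_cases hy : y ∈ F
  · exact Or.inr (Or.inl hy)
  refine Or.inr (Or.inr ?_)
  rcases hF.sup_mem_cases hU hB ha₀ ha₁ ha hx hy hxy with ⟨hx₀, hy₁⟩ | ⟨hx₁, hy₀⟩
  · obtain ⟨A, hA, hyA⟩ := hlower y hy hy₁
    obtain ⟨B, hB, hxB⟩ := hupper x hx hx₀
    exact ⟨⟨A, hA, Or.inr hyA⟩, ⟨B, hB, Or.inl hxB⟩⟩
  · obtain ⟨A, hA, hxA⟩ := hlower x hx hx₁
    obtain ⟨B, hB, hyB⟩ := hupper y hy hy₀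
    exact ⟨⟨A, hA, Or.inl hxA⟩, ⟨B, hB, Or.inr hyB⟩⟩

theorem exists_separator (hF : IsMaxFilterAvoiding F b) (hL2 : IdL2 L) (hU : IdU L)
    (hB : IdB L) : ∃ σ : Separator L, σ.mid = F := by
  by_cases hprime : ∀ x y, x ⊔ y ∈ F → x ∈ F ∨ y ∈ F
  · exact ⟨⟨F, ∅, ∅, hF.isProperFilter, by simp, by simp, by simp,
      fun x y h => (hprime x y h).imp_right Or.inl⟩, rfl⟩
  push Not at hprime
  obtain ⟨a₀, a₁, ha, ha₀, ha₁⟩ := hprime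
  exact hF.exists_separator_of_sup_mem hL2 hU hB ha₀ ha₁ ha

end IsMaxFilterAvoiding

theorem Separator.exists_of_not_le {L : Type*} [Lattice L] (hL2 : IdL2 L) (hU : IdU L)
    (hB : IdB L) {a b : L} (hab : ¬ a ≤ b) : ∃ σ : Separator L, a ∈ σ.mid ∧ b ∉ σ.mid := by
  obtain ⟨F, hF, haF⟩ := exists_isMaxFilterAvoiding hab
  obtain ⟨σ, rfl⟩ := hF.exists_separator hL2 hU hB
  exact ⟨σ, haF, hF.notMem⟩

section TreeLike

variable {P : Type*} [PartialOrder P]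

theorem lengthLE_of_strictMono {n : ℕ} (f : P → ℕ) (hf : StrictMono f) (hfn : ∀ x, f x ≤ n) :
    lengthLE P n := by
  intro C hC
  have hinj : Set.InjOn f C := by
    intro x hx y hy hxy
    by_contra hne
    rcases hC hx hy hne with h | h
    · exact (hf (h.lt_of_ne hne)).ne hxy
    · exact (hf (h.lt_of_ne (Ne.symm hne))).ne' hxy
  simpa using Finset.card_le_card_of_injOn f (t := Finset.range (n + 1))
    (fun x _ => Finset.mem_range.2 (Nat.lt_succ_of_le (hfn x))) hinj

theorem lengthLE.finite_of_isChain {n : ℕ} (hP : lengthLE P n) {C : Set P}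
    (hC : IsChain (· ≤ ·) C) : C.Finite := by
  by_contra hinf
  obtain ⟨t, hts, ht⟩ := Set.Infinite.exists_subset_card_eq hinf (n + 2)
  have := hP t (hC.mono hts)
  omega

variable {c : P → P}

theorem center_eq_and_of_adj (hc : ∀ a b : P, a ⋖ b → c a = c b ∧ (a = c a ∨ b = c b))
    {x y : P} (hxy : x ⋖ y ∨ y ⋖ x) : c x = c y ∧ (x = c x ∨ y = c y) := by
  rcases hxy with h | h
  · exact hc x y h
  · exact (hc y x h).imp Eq.symm Or.symm

theorem eq_center_of_adj_of_adj
    (hc : ∀ a b : P, a ⋖ b → c a = c b ∧ (a = c a ∨ b = c b)) {x y z : P}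
    (hxy : x ⋖ y ∨ y ⋖ x) (hyz : y ⋖ z ∨ z ⋖ y) (hxz : x ≠ z) : y = c y := by
  obtain ⟨h₁, h₁'⟩ := center_eq_and_of_adj hc hxy
  obtain ⟨h₂, h₂'⟩ := center_eq_and_of_adj hc hyz
  by_contra hy
  exact hxz ((h₁'.resolve_right hy).trans (h₁.trans (h₂.trans (h₂'.resolve_left hy).symm)))

theorem path_eq_of_center (hc : ∀ a b : P, a ⋖ b → c a = c b ∧ (a = c a ∨ b = c b))
    {a b : P} {l : List P} (hn : l.Nodup) (ha : l.head? = some a) (hb : l.getLast? = some b)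
    (hl : l.IsChain (fun u v => u ⋖ v ∨ v ⋖ u)) :
    (l = [a] ∧ a = b) ∨ (l = [a, b] ∧ a ≠ b ∧ (a ⋖ b ∨ b ⋖ a)) ∨
      (l = [a, c a, b] ∧ a ≠ b ∧ ¬ (a ⋖ b ∨ b ⋖ a)) := by
  rcases l with _ | ⟨x, _ | ⟨y, _ | ⟨z, _ | ⟨w, l⟩⟩⟩⟩
  · simp at ha
  · simp only [List.head?_cons, List.getLast?_singleton, Option.some.injEq] at ha hb
    subst ha hb
    exact Or.inl ⟨rfl, rfl⟩
  · simp only [List.head?_cons, List.getLast?_cons_cons, List.getLast?_singleton,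
      Option.some.injEq] at ha hb
    subst ha hb
    simp only [List.isChain_cons_cons, List.isChain_singleton, and_true] at hl
    simp only [List.nodup_cons, List.mem_singleton, List.not_mem_nil, not_false_eq_true,
      List.nodup_nil, and_true] at hn
    exact Or.inr (Or.inl ⟨rfl, hn, hl⟩)
  · simp only [List.head?_cons, List.getLast?_cons_cons, List.getLast?_singleton,
      Option.some.injEq] at ha hb
    subst ha hb
    simp only [List.isChain_cons_cons, List.isChain_singleton, and_true] at hl
    simp only [List.nodup_cons, List.mem_cons, List.not_mem_nil, or_false, not_or] at hn
    have hy := eq_center_of_adj_of_adj hc hl.1 hl.2 hn.1.2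
    have hcxy := (center_eq_and_of_adj hc hl.1).1
    refine Or.inr (Or.inr ⟨by rw [hcxy, ← hy], hn.1.2, fun hxz => ?_⟩)
    have hcyz := (center_eq_and_of_adj hc hl.2).1
    rcases (center_eq_and_of_adj hc hxz).2 with h | h
    · exact hn.1.1 (h.trans (hcxy.trans hy.symm))
    · exact hn.2.1 (hy.trans (hcyz.trans h.symm))
  · simp only [List.isChain_cons_cons] at hl
    simp only [List.nodup_cons, List.mem_cons, not_or] at hn
    have hy := eq_center_of_adj_of_adj hc hl.1 hl.2.1 hn.1.2.1
    have hz := eq_center_of_adj_of_adj hc hl.2.1 hl.2.2.1 hn.2.1.2.1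
    exact absurd (hy.trans ((center_eq_and_of_adj hc hl.2.1).1.trans hz.symm)) hn.2.1.1

theorem treeLike_of_center {n : ℕ} (hP : lengthLE P n)
    (hc : ∀ a b : P, a ⋖ b → c a = c b ∧ (a = c a ∨ b = c b)) : TreeLike P := by
  refine ⟨fun C hC _ _ => hP.finite_of_isChain hC,
    fun a b l₁ l₂ hn₁ ha₁ hb₁ hl₁ hn₂ ha₂ hb₂ hl₂ => ?_⟩
  rcases path_eq_of_center hc hn₁ ha₁ hb₁ hl₁ with ⟨rfl, h₁⟩ | ⟨rfl, h₁, h₁'⟩ | ⟨rfl, h₁, h₁'⟩ <;>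
    rcases path_eq_of_center hc hn₂ ha₂ hb₂ hl₂ with ⟨rfl, h₂⟩ | ⟨rfl, h₂, h₂'⟩ | ⟨rfl, h₂, h₂'⟩ <;>
    first | rfl | contradiction

end TreeLike

namespace PIJ

variable {I J : Type*}

theorem le_iff {a b : PIJ I J} : a ≤ b ↔ a = b ∨ a.rank < b.rank := Iff.rfl

theorem lt_iff {a b : PIJ I J} : a < b ↔ a.rank < b.rank := by
  rw [lt_iff_le_and_ne, le_iff]
  constructor
  · rintro ⟨h | h, hne⟩
    exacts [absurd h hne, h]
  · rintro h
    exact ⟨Or.inr h, by rintro rfl; exact lt_irrefl _ h⟩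

theorem rank_le_two (a : PIJ I J) : a.rank ≤ 2 := by
  rcases a with _ | _ | _ <;> simp [rank]

instance [Finite I] [Finite J] : Finite (PIJ I J) := inferInstanceAs (Finite (I ⊕ (Unit ⊕ J)))

end PIJ

abbrev SepPoset (L : Type*) [Lattice L] : Type _ := Σ σ : Separator L, PIJ σ.lower σ.upper

namespace SepPoset

variable {L : Type*} [Lattice L]

def filter : SepPoset L → Set L
  | ⟨_, Sum.inl A⟩ => A
  | ⟨σ, Sum.inr (Sum.inl _)⟩ => σ.mid
  | ⟨_, Sum.inr (Sum.inr B)⟩ => B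

theorem isProperFilter_filter (x : SepPoset L) : IsProperFilter x.filter := by
  rcases x with ⟨σ, A | _ | B⟩
  · exact (σ.isPrimeFilter_of_mem_lower A A.2).toIsProperFilter
  · exact σ.isProperFilter_mid
  · exact (σ.isPrimeFilter_of_mem_upper B B.2).toIsProperFilter

def center (x : SepPoset L) : SepPoset L := ⟨x.1, Sum.inr (Sum.inl ())⟩

theorem lengthLE_two : lengthLE (SepPoset L) 2 :=
  lengthLE_of_strictMono (fun x => x.2.rank) (by rintro _ _ ⟨σ, p, q, h⟩; exact PIJ.lt_iff.1 h)
    fun x => x.2.rank_le_two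

theorem center_eq_and_of_covBy {x y : SepPoset L} (h : x ⋖ y) :
    x.center = y.center ∧ (x = x.center ∨ y = y.center) := by
  obtain ⟨⟨σ, p, q, hpq⟩, hxy⟩ := h
  refine ⟨rfl, ?_⟩
  rw [PIJ.lt_iff] at hpq
  rcases p with A | ⟨⟩ | B <;> rcases q with A' | ⟨⟩ | B' <;>
    simp only [PIJ.rank, Sum.elim_inl, Sum.elim_inr] at hpq <;>
    first | omega | exact Or.inl rfl | exact Or.inr rfl | skip
  exact (hxy (c := ⟨σ, Sum.inr (Sum.inl ())⟩) (Sigma.mk_lt_mk_iff.2 (PIJ.lt_iff.2 Nat.zero_lt_one))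
    (Sigma.mk_lt_mk_iff.2 (PIJ.lt_iff.2 Nat.one_lt_two))).elim

theorem treeLike : TreeLike (SepPoset L) :=
  treeLike_of_center lengthLE_two fun _ _ => center_eq_and_of_covBy

theorem ordConnected_setOf_mem_filter (a : L) : {x : SepPoset L | a ∈ x.filter}.OrdConnected := by
  refine ⟨?_⟩
  rintro x hx y hy z ⟨hxz, hzy⟩
  obtain ⟨σ, p, r, hpr⟩ := hxz
  obtain ⟨_, _, q, hrq⟩ := hzy
  rcases PIJ.le_iff.1 hpr with rfl | hpr
  · exact hx
  rcases PIJ.le_iff.1 hrq with rfl | hrq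
  · exact hy
  rcases p with A | _ | _ <;> rcases r with _ | _ | _ <;> rcases q with _ | _ | B <;>
    simp only [PIJ.rank, Sum.elim_inl, Sum.elim_inr] at hpr hrq <;> try omega
  exact σ.inter_subset_mid A A.2 B B.2 ⟨hx, hy⟩

def embed (a : L) : Co (SepPoset L) := ⟨{x | a ∈ x.filter}, ordConnected_setOf_mem_filter a⟩

theorem embed_mono {a b : L} (h : a ≤ b) : embed a ≤ embed b :=
  fun x hx => x.isProperFilter_filter.isUpperSet h hx

theorem embed_inf (a b : L) : embed (a ⊓ b) = embed a ⊓ embed b :=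
  le_antisymm (le_inf (embed_mono inf_le_left) (embed_mono inf_le_right))
    fun x hx => x.isProperFilter_filter.infClosed (inf_le_left (a := embed a) hx)
      (inf_le_right (a := embed a) hx)

theorem embed_sup (a b : L) : embed (a ⊔ b) = embed a ⊔ embed b := by
  refine le_antisymm ?_ (sup_le (embed_mono le_sup_left) (embed_mono le_sup_right))
  set Z := embed a ⊔ embed b
  have hZ : ∀ x : SepPoset L, a ∈ x.filter ∨ b ∈ x.filter → x ∈ Z.1 := fun x h =>
    h.elim (fun ha => le_sup_left (b := embed b) ha) (fun hb => le_sup_right (a := embed a) hb)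
  rintro ⟨σ, A | _ | B⟩ hx
  · exact hZ _ ((σ.isPrimeFilter_of_mem_lower A A.2).mem_or_mem hx)
  · rcases σ.sup_mem_mid a b hx with h | h | ⟨⟨A, hA, hA'⟩, ⟨B, hB, hB'⟩⟩
    · exact hZ _ (Or.inl h)
    · exact hZ _ (Or.inr h)
    · exact Z.2.out (hZ ⟨σ, Sum.inl ⟨A, hA⟩⟩ hA') (hZ ⟨σ, Sum.inr (Sum.inr ⟨B, hB⟩)⟩ hB')
        ⟨Sigma.mk_le_mk_iff.2 (Or.inr Nat.zero_lt_one),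
          Sigma.mk_le_mk_iff.2 (Or.inr Nat.one_lt_two)⟩
  · exact hZ _ ((σ.isPrimeFilter_of_mem_upper B B.2).mem_or_mem hx)

theorem le_of_embed_le (hL2 : IdL2 L) (hU : IdU L) (hB : IdB L) {a b : L}
    (h : embed a ≤ embed b) : a ≤ b := by
  by_contra hab
  obtain ⟨σ, ha, hb⟩ := Separator.exists_of_not_le hL2 hU hB hab
  exact hb (h (show (⟨σ, Sum.inr (Sum.inl ())⟩ : SepPoset L) ∈ (embed a).1 from ha))

theorem isBot_embed {z : L} (hz : IsBot z) : IsBot (embed z) :=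
  fun _ x hx => absurd hx (x.isProperFilter_filter.notMem_of_isBot hz)

theorem isTop_embed {t : L} (ht : IsTop t) : IsTop (embed t) :=
  fun _ x _ => x.isProperFilter_filter.mem_of_isTop ht

end SepPoset

theorem stmt2.{u} (L : Type u) [Lattice L] (hL2 : IdL2 L) (hU : IdU L) (hB : IdB L) :
    ∃ (Γ : Type u) (_ : PartialOrder Γ), TreeLike Γ ∧ lengthLE Γ 2 ∧
      (∃ f : LatticeHom L (Co Γ), Function.Injective f ∧
        (∀ z : L, IsBot z → IsBot (f z)) ∧ (∀ z : L, IsTop z → IsTop (f z))) ∧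
      (Finite L → Finite Γ) := by
  refine ⟨SepPoset L, inferInstance, SepPoset.treeLike, SepPoset.lengthLE_two, ?_,
    fun _ => inferInstance⟩
  refine ⟨⟨⟨SepPoset.embed, SepPoset.embed_sup⟩, SepPoset.embed_inf⟩, fun a b h => ?_,
    fun _ => SepPoset.isBot_embed, fun _ => SepPoset.isTop_embed⟩
  exact le_antisymm (SepPoset.le_of_embed_le hL2 hU hB h.le)
    (SepPoset.le_of_embed_le hL2 hU hB h.ge)
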